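/- Let H be a non-normal maximal subgroup of a finite solvable group G and let q be a prime dividing the order of the Fitting subgroup F(H/Core_G H). Then H has a Sylow q-subgroup Q of G (i.e., Q is a Sylow q-subgroup of G contained in H) such that for every subgroup H₁ with Q ⊆ H₁ ⊆ H, the normalizer N_G(H₁) is contained in H. -/

import Mathlib

/-- The Fitting subgroup of a group `X`: the subgroup generated by (for finite groups,
the largest of) all nilpotent normal subgroups of `X`. -/
def fittingSubgroup (X : Type*) [Group X] : Subgroup X :=
  sSup {N : Subgroup X | N.Normal ∧ Group.IsNilpotent N}

/-!
Pass to `Ḡ = G / Core_G H`, in which `M = H / Core_G H` is a core-free maximal subgroup. A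
nontrivial abelian normal subgroup `A` of the solvable group `Ḡ` is not contained in `M`, so
`AM = Ḡ`, and `A ∩ M`, being normalized by both, is trivial. Since `q` divides `|F(M)|`, `M` has a
nontrivial normal `q`-subgroup `L`. The centralizer `C_A(L)` is again normalized by `A` and `M`;
were it nontrivial, `L` would be normalized by `C_A(L) M = Ḡ`, although `M` is core-free. So
`C_A(L) = 1`, and counting fixed points of `L` acting on `A` then gives `q ∤ |A| = |G : H|`, so a
Sylow `q`-subgroup `Q` of `H` is one of `G`, and its image contains `L`. If `x = am` normalizes some
`H₁` with `Q ≤ H₁ ≤ H`, then `x` conjugates `L` into `M`, so `[a, L] ⊆ A ∩ M = 1`, whence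
`a ∈ C_A(L) = 1` and `x ∈ H`.
-/

open Subgroup

section

variable {G : Type*} [Group G]

theorem Subgroup.card_sup_dvd_of_normal (H N : Subgroup G) [N.Normal] :
    Nat.card ↥(H ⊔ N) ∣ Nat.card H * Nat.card N := by
  rw [card_eq_card_quotient_mul_card_subgroup (N.subgroupOf (H ⊔ N)),
    ← Nat.card_congr (QuotientGroup.quotientInfEquivProdNormalQuotient H N).toEquiv,
    Nat.card_congr (subgroupOfEquivOfLe le_sup_right).toEquiv]
  exact Nat.mul_dvd_mul (card_quotient_dvd_card _) dvd_rfl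

theorem Subgroup.exists_mem_dvd_card_of_dvd_card_sSup [Finite G] {q : ℕ} (hq : q.Prime)
    {S : Set (Subgroup G)} (hS : ∀ N ∈ S, N.Normal) (h : q ∣ Nat.card ↥(sSup S)) :
    ∃ N ∈ S, q ∣ Nat.card N := by
  by_contra! hndvd
  have hfin : S.Finite := Set.toFinite S
  rw [← hfin.coe_toFinset, ← Finset.sup_id_eq_sSup] at h
  refine (Finset.sup_induction (p := fun N : Subgroup G => N.Normal ∧ ¬ q ∣ Nat.card N)
    ⟨inferInstance, by simpa using hq.ne_one⟩ ?_ ?_).2 h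
  · rintro A ⟨hA, hqA⟩ B ⟨hB, hqB⟩
    refine ⟨sup_normal A B, fun hAB => ?_⟩
    rcases hq.dvd_mul.mp (hAB.trans (card_sup_dvd_of_normal A B)) with h | h
    exacts [hqA h, hqB h]
  · intro N hN
    rw [hfin.mem_toFinset] at hN
    exact ⟨hS N hN, hndvd N hN⟩

theorem Subgroup.exists_normal_isPGroup_ne_bot_of_isNilpotent [Finite G] {q : ℕ} [Fact q.Prime]
    {N : Subgroup G} [N.Normal] [Group.IsNilpotent N] (h : q ∣ Nat.card N) :
    ∃ P : Subgroup G, P.Normal ∧ IsPGroup q P ∧ P ≠ ⊥ := by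
  obtain ⟨P⟩ := (inferInstance : Nonempty (Sylow q N))
  have := P.characteristic_of_normal inferInstance
  refine ⟨(P : Subgroup N).map N.subtype, inferInstance, P.isPGroup'.map _, ?_⟩
  rw [Ne, map_eq_bot_iff_of_injective _ N.subtype_injective]
  exact P.ne_bot_of_dvd_card h

theorem exists_normal_isPGroup_ne_bot_of_dvd_card_fittingSubgroup [Finite G] {q : ℕ}
    (hq : q.Prime) (h : q ∣ Nat.card (fittingSubgroup G)) :
    ∃ P : Subgroup G, P.Normal ∧ IsPGroup q P ∧ P ≠ ⊥ := by
  have : Fact q.Prime := ⟨hq⟩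
  obtain ⟨N, ⟨hN, hNnil⟩, hqN⟩ := exists_mem_dvd_card_of_dvd_card_sSup hq (fun N hN => hN.1) h
  exact exists_normal_isPGroup_ne_bot_of_isNilpotent hqN

theorem IsPGroup.inf_centralizer_ne_bot_of_dvd_card [Finite G] {q : ℕ} [Fact q.Prime]
    {L V : Subgroup G} [V.Normal] (hL : IsPGroup q L) (hV : q ∣ Nat.card V) :
    V ⊓ centralizer L ≠ ⊥ := by
  let S : Subgroup (ConjAct G) := L.map (ConjAct.toConjAct : G ≃* ConjAct G).toMonoidHom
  have hS : IsPGroup q S := hL.map _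
  obtain ⟨v, hv, hne⟩ :=
    hS.exists_fixed_point_of_prime_dvd_card_of_fixed_point V hV (a := 1) fun _ => smul_one _
  have hvC : (v : G) ∈ V ⊓ centralizer L := by
    refine ⟨v.2, mem_centralizer_iff.mpr fun l hl => ?_⟩
    have := congrArg Subtype.val (hv ⟨ConjAct.toConjAct l, mem_map_of_mem _ hl⟩)
    rw [Subgroup.smul_def, ConjAct.Subgroup.val_conj_smul, ConjAct.smul_def,
      ConjAct.ofConjAct_toConjAct] at this
    exact mul_inv_eq_iff_eq_mul.mp this
  intro hbot
  rw [hbot, mem_bot] at hvC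
  exact hne (Subtype.ext hvC.symm)

theorem Group.IsSolvable.exists_normal_isMulCommutative_ne_bot [Group.IsSolvable G]
    [Nontrivial G] : ∃ A : Subgroup G, A.Normal ∧ IsMulCommutative A ∧ A ≠ ⊥ := by
  classical
  obtain ⟨n, hn⟩ := Group.IsSolvable.solvable (G := G)
  have hex : ∃ n, derivedSeries G (n + 1) = ⊥ :=
    ⟨n, by rw [derivedSeries_succ, hn, commutator_bot_left]⟩
  refine ⟨derivedSeries G (Nat.find hex), derivedSeries_normal _ _, ?_, ?_⟩
  · rw [← le_centralizer_iff_isMulCommutative, ← commutator_eq_bot_iff_le_centralizer,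
      ← derivedSeries_succ]
    exact Nat.find_spec hex
  · cases h : Nat.find hex with
    | zero => exact top_ne_bot
    | succ k => exact Nat.find_min hex (by omega)

theorem Subgroup.Normal.of_sup_le_normalizer {A M S : Subgroup G} (h : A ⊔ M = ⊤)
    (hA : A ≤ normalizer S) (hM : M ≤ normalizer S) : S.Normal :=
  normalizer_eq_top_iff.mp (top_unique (h ▸ sup_le hA hM))

theorem Subgroup.le_normalizer_of_le_of_isMulCommutative {A S : Subgroup G}
    [IsMulCommutative A] (h : S ≤ A) : A ≤ normalizer S :=
  (le_centralizer (H := A)).trans ((centralizer_le h).trans (centralizer_le_normalizer _))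

theorem Subgroup.normalizer_le_normalizer_centralizer (L : Subgroup G) :
    normalizer L ≤ normalizer (centralizer (L : Set G) : Set G) := by
  rw [le_normalizer_iff]
  intro g hg c hc
  rw [mem_centralizer_iff] at hc ⊢
  intro l hl
  have hl' : g⁻¹ * l * g ∈ L := by simpa using (mem_normalizer_iff''.mp hg l).mp hl
  calc l * (g * c * g⁻¹) = g * ((g⁻¹ * l * g) * c) * g⁻¹ := by group
    _ = g * (c * (g⁻¹ * l * g)) * g⁻¹ := by rw [hc _ hl']
    _ = g * c * g⁻¹ * l := by group

namespace Subgroup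

variable {M : Subgroup G}

theorem eq_bot_of_le_of_normalCore_eq_bot (hcore : M.normalCore = ⊥) {N : Subgroup G}
    [N.Normal] (h : N ≤ M) : N = ⊥ :=
  le_bot_iff.mp (hcore ▸ normal_le_normalCore.mpr h)

theorem sup_eq_top_of_normalCore_eq_bot (hM : IsCoatom M) (hcore : M.normalCore = ⊥)
    {N : Subgroup G} [N.Normal] (hN : N ≠ ⊥) : N ⊔ M = ⊤ :=
  hM.2 _ (right_lt_sup.mpr fun h => hN (eq_bot_of_le_of_normalCore_eq_bot hcore h))

section IsMulCommutative

variable (hM : IsCoatom M) (hcore : M.normalCore = ⊥) {A : Subgroup G} [A.Normal]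
  [IsMulCommutative A] (hA : A ≠ ⊥)
include hM hcore hA

theorem inf_eq_bot_of_normalCore_eq_bot : A ⊓ M = ⊥ := by
  have : (A ⊓ M).Normal := Normal.of_sup_le_normalizer
    (sup_eq_top_of_normalCore_eq_bot hM hcore hA)
    (le_normalizer_of_le_of_isMulCommutative inf_le_left)
    ((le_inf le_normalizer_of_normal le_normalizer).trans inf_normalizer_le_normalizer_inf)
  exact eq_bot_of_le_of_normalCore_eq_bot hcore inf_le_right

theorem index_eq_card_of_normalCore_eq_bot : M.index = Nat.card A :=
  (isComplement'_of_disjoint_and_mul_eq_univ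
    (disjoint_iff.mpr (inf_eq_bot_of_normalCore_eq_bot hM hcore hA))
    (by rw [← normal_mul, sup_eq_top_of_normalCore_eq_bot hM hcore hA, coe_top])).index_eq_card

theorem inf_centralizer_eq_bot_of_normalCore_eq_bot {L : Subgroup G} (hLM : L ≤ M)
    (hL : L ≠ ⊥) (hML : M ≤ normalizer L) : A ⊓ centralizer L = ⊥ := by
  have : (A ⊓ centralizer L).Normal := Normal.of_sup_le_normalizer
    (sup_eq_top_of_normalCore_eq_bot hM hcore hA)
    (le_normalizer_of_le_of_isMulCommutative inf_le_left)
    ((le_inf le_normalizer_of_normal (hML.trans (normalizer_le_normalizer_centralizer L))).trans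
      inf_normalizer_le_normalizer_inf)
  by_contra hC
  have : L.Normal := Normal.of_sup_le_normalizer (sup_eq_top_of_normalCore_eq_bot hM hcore hC)
    (inf_le_right.trans (centralizer_le_normalizer _)) hML
  exact hL (eq_bot_of_le_of_normalCore_eq_bot hcore hLM)

theorem mem_of_forall_conj_mem_of_isMulCommutative {L : Subgroup G} (hLM : L ≤ M)
    (hL : L ≠ ⊥) (hML : M ≤ normalizer L) {x : G} (hx : ∀ l ∈ L, x * l * x⁻¹ ∈ M) :
    x ∈ M := by
  obtain ⟨a, ha, m, hm, rfl⟩ :=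
    mem_sup_of_normal_left.mp (sup_eq_top_of_normalCore_eq_bot hM hcore hA ▸ mem_top x)
  suffices a ∈ A ⊓ centralizer L by
    rw [inf_centralizer_eq_bot_of_normalCore_eq_bot hM hcore hA hLM hL hML, mem_bot] at this
    simpa [this] using hm
  refine ⟨ha, mem_centralizer_iff.mpr fun l hl => ?_⟩
  have hcomm : a * l * a⁻¹ * l⁻¹ ∈ A ⊓ M := by
    refine mem_inf.mpr ⟨?_, ?_⟩
    · simpa only [mul_assoc] using
        mul_mem ha ((inferInstance : A.Normal).conj_mem _ (inv_mem ha) l)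
    · have := hx (m⁻¹ * l * m) ((mem_normalizer_iff''.mp (hML hm) l).mp hl)
      exact mul_mem (by simpa [mul_assoc] using this) (inv_mem (hLM hl))
  rw [inf_eq_bot_of_normalCore_eq_bot hM hcore hA, mem_bot, mul_inv_eq_one,
    mul_inv_eq_iff_eq_mul] at hcomm
  exact hcomm.symm

end IsMulCommutative

theorem nontrivial_of_isCoatom (hM : IsCoatom M) : Nontrivial G :=
  (subsingleton_or_nontrivial G).resolve_left fun _ => hM.1 (Subsingleton.elim _ _)

theorem not_dvd_index_of_normalCore_eq_bot [Finite G] [Group.IsSolvable G] (hM : IsCoatom M)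
    (hcore : M.normalCore = ⊥) {q : ℕ} [Fact q.Prime] {L : Subgroup G} (hLq : IsPGroup q L)
    (hLM : L ≤ M) (hL : L ≠ ⊥) (hML : M ≤ normalizer L) : ¬ q ∣ M.index := by
  have := nontrivial_of_isCoatom hM
  obtain ⟨A, hAn, hAc, hA⟩ := Group.IsSolvable.exists_normal_isMulCommutative_ne_bot (G := G)
  rw [index_eq_card_of_normalCore_eq_bot hM hcore hA]
  exact fun hq => hLq.inf_centralizer_ne_bot_of_dvd_card hq
    (inf_centralizer_eq_bot_of_normalCore_eq_bot hM hcore hA hLM hL hML)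

theorem mem_of_forall_conj_mem_of_normalCore_eq_bot [Group.IsSolvable G] (hM : IsCoatom M)
    (hcore : M.normalCore = ⊥) {L : Subgroup G} (hLM : L ≤ M) (hL : L ≠ ⊥)
    (hML : M ≤ normalizer L) {x : G} (hx : ∀ l ∈ L, x * l * x⁻¹ ∈ M) : x ∈ M := by
  have := nontrivial_of_isCoatom hM
  obtain ⟨A, hAn, hAc, hA⟩ := Group.IsSolvable.exists_normal_isMulCommutative_ne_bot (G := G)
  exact mem_of_forall_conj_mem_of_isMulCommutative hM hcore hA hLM hL hML hx

theorem isCoatom_map_of_surjective {G' : Type*} [Group G'] {f : G →* G'}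
    (hf : Function.Surjective f) {H : Subgroup G} (hker : f.ker ≤ H) (hH : IsCoatom H) :
    IsCoatom (H.map f) := by
  have hcomap : (H.map f).comap f = H := comap_map_eq_self hker
  refine ⟨fun htop => hH.1 (by rw [← hcomap, htop, comap_top]), fun T hT => ?_⟩
  rw [← comap_lt_comap_of_surjective hf, hcomap] at hT
  rw [← map_comap_eq_self_of_surjective hf T, hH.2 _ hT, map_top_of_surjective f hf]

theorem normalCore_map_mk'_normalCore (H : Subgroup G) :
    (H.map (QuotientGroup.mk' H.normalCore)).normalCore = ⊥ := by
  set π := QuotientGroup.mk' H.normalCore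
  have hker : π.ker ≤ H := by rw [QuotientGroup.ker_mk']; exact normalCore_le H
  have hle : (H.map π).normalCore.comap π ≤ H :=
    (comap_mono (normalCore_le _)).trans (comap_map_eq_self hker).le
  rw [← map_comap_eq_self_of_surjective (QuotientGroup.mk'_surjective _) (H.map π).normalCore,
    eq_bot_iff, map_le_iff_le_comap, MonoidHom.comap_bot, QuotientGroup.ker_mk']
  exact normal_le_normalCore.mpr hle

theorem exists_isPGroup_le_map_mk'_normalCore (H : Subgroup G) {q : ℕ}
    {P : Subgroup (H ⧸ H.normalCore.subgroupOf H)} [P.Normal] (hPq : IsPGroup q P)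
    (hP : P ≠ ⊥) :
    ∃ L : Subgroup (G ⧸ H.normalCore), L ≤ H.map (QuotientGroup.mk' H.normalCore) ∧ L ≠ ⊥ ∧
      IsPGroup q L ∧ H.map (QuotientGroup.mk' H.normalCore) ≤ normalizer L := by
  set π := QuotientGroup.mk' H.normalCore
  set f := π.comp H.subtype
  have hker : H.normalCore.subgroupOf H = f.ker := by
    rw [← MonoidHom.comap_ker, QuotientGroup.ker_mk']; rfl
  set φ := QuotientGroup.lift _ f hker.le
  have hφ : Function.Injective φ := (QuotientGroup.injective_lift_iff _ _ _).mpr hker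
  have hrange : φ.range = H.map π := by
    rw [MonoidHom.range_eq_map, ← map_top_of_surjective _ (QuotientGroup.mk'_surjective _),
      map_map, QuotientGroup.lift_comp_mk', ← MonoidHom.range_eq_map, MonoidHom.range_comp,
      range_subtype]
  refine ⟨P.map φ, hrange ▸ map_le_range φ P, ?_, hPq.map φ, ?_⟩
  · rwa [Ne, map_eq_bot_iff_of_injective _ hφ]
  · rw [← hrange, MonoidHom.range_eq_map, ← normalizer_eq_top (H := P)]
    exact le_normalizer_map φ

end Subgroup

theorem IsPGroup.le_sylow_of_le_normalizer {p : ℕ} {L : Subgroup G} (hL : IsPGroup p L)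
    (P : Sylow p G) (h : (P : Subgroup G) ≤ normalizer (L : Set G)) : L ≤ P :=
  sup_eq_right.mp (P.is_maximal' (hL.to_sup_of_normal_left' P.isPGroup' h) le_sup_right)

theorem Sylow.exists_le_of_not_dvd_index [Finite G] {p : ℕ} [Fact p.Prime] {H : Subgroup G}
    (h : ¬ p ∣ H.index) : ∃ P : Sylow p G, (P : Subgroup G) ≤ H := by
  obtain ⟨P⟩ := (inferInstance : Nonempty (Sylow p H))
  have hP : ¬ p ∣ ((P : Subgroup H).map H.subtype).index := by
    rw [index_map_subtype, (Fact.out : p.Prime).dvd_mul, not_or]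
    exact ⟨P.not_dvd_index, h⟩
  exact ⟨(P.isPGroup'.map H.subtype).toSylow hP, map_subtype_le _⟩

end

theorem normalizer_le_of_sylow_le_of_maximal_not_normal_general
    {G : Type*} [Group G] [Finite G] [Group.IsSolvable G]
    (H : Subgroup G) (hmax : IsCoatom H)
    (q : ℕ) (hq : q.Prime)
    (hdvd : q ∣ Nat.card (fittingSubgroup (H ⧸ H.normalCore.subgroupOf H))) :
    ∃ Q : Sylow q G, (Q : Subgroup G) ≤ H ∧
      ∀ H₁ : Subgroup G, (Q : Subgroup G) ≤ H₁ → H₁ ≤ H → Subgroup.normalizer (H₁ : Set G) ≤ H := by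
  have : Fact q.Prime := ⟨hq⟩
  set π := QuotientGroup.mk' H.normalCore
  have hπ : Function.Surjective π := QuotientGroup.mk'_surjective _
  have hker : π.ker ≤ H := by rw [QuotientGroup.ker_mk']; exact normalCore_le H
  have hM : IsCoatom (H.map π) := isCoatom_map_of_surjective hπ hker hmax
  have hcore := H.normalCore_map_mk'_normalCore
  obtain ⟨P, hPn, hPq, hP⟩ := exists_normal_isPGroup_ne_bot_of_dvd_card_fittingSubgroup hq hdvd
  obtain ⟨L, hLM, hL, hLq, hML⟩ := H.exists_isPGroup_le_map_mk'_normalCore hPq hP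
  obtain ⟨Q, hQH⟩ := Sylow.exists_le_of_not_dvd_index (p := q) (H := H) (by
    rw [← H.index_map_eq hπ hker]
    exact not_dvd_index_of_normalCore_eq_bot hM hcore hLq hLM hL hML)
  refine ⟨Q, hQH, fun H₁ hQH₁ hH₁H x hx => ?_⟩
  have hLQ : L ≤ (Q : Subgroup G).map π :=
    hLq.le_sylow_of_le_normalizer (Q.mapSurjective hπ) ((map_mono hQH).trans hML)
  rw [← comap_map_eq_self hker]
  refine mem_of_forall_conj_mem_of_normalCore_eq_bot hM hcore hLM hL hML fun l hl => ?_
  obtain ⟨h₁, hh₁, rfl⟩ := map_mono hQH₁ (hLQ hl)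
  exact ⟨x * h₁ * x⁻¹, hH₁H ((mem_normalizer_iff.mp hx h₁).mp hh₁), by simp⟩

/-- **Corollary 1.1.** Let `H` be a non-normal maximal subgroup of a finite solvable group `G`
and let `q` be a prime dividing the order of `F(H / Core_G H)`. Then `H` contains a Sylow
`q`-subgroup `Q` of `G` such that `N_G(H₁) ≤ H` for every subgroup `H₁` with `Q ⊆ H₁ ⊆ H`. -/
theorem normalizer_le_of_sylow_le_of_maximal_not_normal
    {G : Type*} [Group G] [Finite G] [Group.IsSolvable G]
    (H : Subgroup G) (hmax : IsCoatom H) (hnn : ¬ H.Normal)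
    (q : ℕ) (hq : q.Prime)
    (hdvd : q ∣ Nat.card (fittingSubgroup (H ⧸ H.normalCore.subgroupOf H))) :
    ∃ Q : Sylow q G, (Q : Subgroup G) ≤ H ∧
      ∀ H₁ : Subgroup G, (Q : Subgroup G) ≤ H₁ → H₁ ≤ H → Subgroup.normalizer (H₁ : Set G) ≤ H :=
  normalizer_le_of_sylow_le_of_maximal_not_normal_general H hmax q hq hdvd
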